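/- For every model M, finite group G of agents, formula φ, and world w of M: M,w ⊨ G saysᵂ φ if and only if for every agent A ∈ G and every world w' with (w,A,w') ∈ R_says, both M,w' ⊨ φ and M,w' ⊨ G saysᵂ φ hold (the fixed-point characterization of mutual agreement). -/
import Mathlib


mutual
inductive SigTerm (Ag Pr : Type) (Op : ℕ → Type) : Type where
  | agent : Ag → SigTerm Ag Pr Op
  | op : (n : ℕ) → Op n → (Fin n → SigTerm Ag Pr Op) → SigTerm Ag Pr Op
  | ofFormula : SigFormula Ag Pr Op → SigTerm Ag Pr Op

inductive SigFormula (Ag Pr : Type) (Op : ℕ → Type) : Type where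
  | atom : Pr → SigFormula Ag Pr Op
  | neg : SigFormula Ag Pr Op → SigFormula Ag Pr Op
  | and : SigFormula Ag Pr Op → SigFormula Ag Pr Op → SigFormula Ag Pr Op
  | entails : SigTerm Ag Pr Op → SigFormula Ag Pr Op → SigFormula Ag Pr Op
  | signs : Ag → SigTerm Ag Pr Op → SigFormula Ag Pr Op
  | says : Ag → SigFormula Ag Pr Op → SigFormula Ag Pr Op
end

namespace SigFormula
variable {Ag Pr : Type} {Op : ℕ → Type}
/-- `φ → ψ` abbreviates `¬(φ ∧ ¬ψ)`. -/
def imp (φ ψ : SigFormula Ag Pr Op) : SigFormula Ag Pr Op := .neg (.and φ (.neg ψ))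
end SigFormula

structure SigModel (Ag Pr : Type) (Op : ℕ → Type) (W : Type) where
  Rsig : W → Ag → SigTerm Ag Pr Op → Prop
  Rent : SigTerm Ag Pr Op → W → Prop
  Rsays : W → Ag → W → Prop
  val : W → Pr → Prop

variable {Ag Pr : Type} {Op : ℕ → Type} {W : Type}

def Sat (M : SigModel Ag Pr Op W) : W → SigFormula Ag Pr Op → Prop
  | w, .atom p => M.val w p
  | w, .neg φ => ¬ Sat M w φ
  | w, .and φ ψ => Sat M w φ ∧ Sat M w ψ
  | w, .entails t φ => ∀ w' : W, M.Rent t w' → Sat M w' φ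
  | w, .signs A t => M.Rsig w A t
  | w, .says A φ => ∀ w' : W, M.Rsays w A w' → Sat M w' φ

def Valid (M : SigModel Ag Pr Op W) (φ : SigFormula Ag Pr Op) : Prop :=
  ∀ w : W, Sat M w φ

/-- SC1: for every formula `φ` and world `w`, `(φ,w) ∈ R_⊳` implies `M,w ⊨ φ`. -/
def SC1 (M : SigModel Ag Pr Op W) : Prop :=
  ∀ (φ : SigFormula Ag Pr Op) (w : W), M.Rent (.ofFormula φ) w → Sat M w φ

/-- SC2: `(w,A,t) ∈ R_sig` and `(w,A,w') ∈ R_says` imply `(t,w') ∈ R_⊳`. -/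
def SC2 (M : SigModel Ag Pr Op W) : Prop :=
  ∀ (w : W) (A : Ag) (t : SigTerm Ag Pr Op) (w' : W),
    M.Rsig w A t → M.Rsays w A w' → M.Rent t w'

/-- SC3: `(w,B,t) ∈ R_sig` and `(w,A,w') ∈ R_says` imply `(w',B,t) ∈ R_sig`. -/
def SC3 (M : SigModel Ag Pr Op W) : Prop :=
  ∀ (w : W) (A B : Ag) (t : SigTerm Ag Pr Op) (w' : W),
    M.Rsig w B t → M.Rsays w A w' → M.Rsig w' B t

/-- `φ` is a substitution instance of a propositional tautology: every
boolean valuation of formulas that respects `¬` and `∧` makes `φ` true. -/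
def IsTaut (φ : SigFormula Ag Pr Op) : Prop :=
  ∀ v : SigFormula Ag Pr Op → Bool,
    (∀ ψ, v (.neg ψ) = !(v ψ)) →
    (∀ ψ χ, v (.and ψ χ) = (v ψ && v χ)) →
    v φ = true

/-- Derivability in the signature logic. -/
inductive Deriv {Ag Pr : Type} {Op : ℕ → Type} : SigFormula Ag Pr Op → Prop where
  | ax1 {φ} : IsTaut φ → Deriv φ
  | ax2 (φ : SigFormula Ag Pr Op) : Deriv (.entails (.ofFormula φ) φ)
  | ax3 (t : SigTerm Ag Pr Op) (φ ψ) :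
      Deriv (((SigFormula.entails t φ).and (.entails t (φ.imp ψ))).imp (.entails t ψ))
  | ax4 (A : Ag) (t : SigTerm Ag Pr Op) (φ) :
      Deriv (((SigFormula.signs A t).and (.entails t φ)).imp (.says A φ))
  | ax5 (A : Ag) (φ ψ) :
      Deriv (((SigFormula.says A φ).and (.says A (φ.imp ψ))).imp (.says A ψ))
  | ax6 (A B : Ag) (t : SigTerm Ag Pr Op) :
      Deriv ((SigFormula.signs B t).imp (.says A (.signs B t)))
  | ax7 (A : Ag) (t : SigTerm Ag Pr Op) (φ) :
      Deriv ((SigFormula.entails t φ).imp (.says A (.entails t φ)))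
  | r1 {φ ψ} : Deriv φ → Deriv (φ.imp ψ) → Deriv ψ
  | r2 (t : SigTerm Ag Pr Op) {φ} : Deriv φ → Deriv (.entails t φ)
  | r3 (A : Ag) {φ} : Deriv φ → Deriv (.says A φ)

/-- The model obtained from `M` by replacing the entailment relation by `R`. -/
def SigModel.withEnt (M : SigModel Ag Pr Op W) (R : SigTerm Ag Pr Op → W → Prop) :
    SigModel Ag Pr Op W := { M with Rent := R }

/-- The semantic operator corresponding to `G says`, on sets of worlds. -/
def GSaysStep (M : SigModel Ag Pr Op W) (G : Finset Ag) (X : Set W) : Set W :=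
  {w | ∀ A ∈ G, ∀ w' : W, M.Rsays w A w' → w' ∈ X}

/-- The set of worlds of `M` where `G says^k φ` holds (`k ≥ 1`). -/
def GSaysK (M : SigModel Ag Pr Op W) (G : Finset Ag) (φ : SigFormula Ag Pr Op) (k : ℕ) : Set W :=
  (GSaysStep M G)^[k] {w | Sat M w φ}

/-- The set of worlds of `M` where `G saysᵂ φ` holds. -/
def GSaysOmega (M : SigModel Ag Pr Op W) (G : Finset Ag) (φ : SigFormula Ag Pr Op) : Set W :=
  {w | ∀ k ≥ 1, w ∈ GSaysK M G φ k}

mutual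
/-- Entailment depth of a term. -/
def SigTerm.depth : SigTerm Ag Pr Op → ℕ
  | .agent _ => 0
  | .op _ _ _ => 0
  | .ofFormula φ => φ.depth
/-- Entailment depth of a formula. -/
def SigFormula.depth : SigFormula Ag Pr Op → ℕ
  | .atom _ => 1
  | .neg φ => φ.depth
  | .and φ ψ => max φ.depth ψ.depth
  | .entails t φ => max t.depth φ.depth + 1
  | .signs _ _ => 1
  | .says _ φ => φ.depth
end

/-- `R ≡_k R'`: the relations agree on all terms of entailment depth at most `k`. -/
def EquivK (R R' : SigTerm Ag Pr Op → W → Prop) (k : ℕ) : Prop :=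
  ∀ (t : SigTerm Ag Pr Op) (w : W), t.depth ≤ k → (R t w ↔ R' t w)

/-- The sequence `R⁰ ⊆ R¹ ⊆ ⋯` of approximations to `R^ω`. -/
def RSeq (M : SigModel Ag Pr Op W) (R0 : SigTerm Ag Pr Op → W → Prop) :
    ℕ → SigTerm Ag Pr Op → W → Prop
  | 0 => R0
  | i + 1 => fun t w => RSeq M R0 i t w ∨
      ∃ φ : SigFormula Ag Pr Op, t = .ofFormula φ ∧ φ.depth = i + 1 ∧
        Sat (M.withEnt (RSeq M R0 i)) w φ

/-- The limit `R^ω = ⋃_i R^i`. -/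
def ROmega (M : SigModel Ag Pr Op W) (R0 : SigTerm Ag Pr Op → W → Prop) :
    SigTerm Ag Pr Op → W → Prop :=
  fun t w => ∃ i, RSeq M R0 i t w

/-- fixed-point characterization of mutual agreement: `M,w ⊨ G saysᵂ φ` iff
for every `A ∈ G` and every `w'` with `(w,A,w') ∈ R_says`, both `M,w' ⊨ φ` and
`M,w' ⊨ G saysᵂ φ`. -/
theorem gsays_omega_fixed_point (M : SigModel Ag Pr Op W) (G : Finset Ag)
    (φ : SigFormula Ag Pr Op) (w : W) :
    w ∈ GSaysOmega M G φ ↔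
      ∀ A ∈ G, ∀ w' : W, M.Rsays w A w' → (Sat M w' φ ∧ w' ∈ GSaysOmega M G φ) := by
  constructor
  · intro h A hA w' hR
    constructor
    · exact h 1 le_rfl A hA w' hR
    · intro k hk
      have h2 := h (k + 1) (by omega)
      rw [GSaysK, Function.iterate_succ_apply'] at h2
      exact h2 A hA w' hR
  · intro h k hk
    induction k with
    | zero => omega
    | succ n ih =>
      rw [GSaysK, Function.iterate_succ_apply']
      intro A hA w' hR
      rcases Nat.eq_zero_or_pos n with h0 | h0
      · subst h0; exact (h A hA w' hR).1
      · exact (h A hA w' hR).2 n h0
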